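/- Let d ≥ 1 and let j : (0,∞) → [0,∞) be nonincreasing with ∫_{ℝ^d} min{1,|x|²} j(|x|) dx < ∞. Suppose there exist c₀ > 0 and R₀ > 0 with j(r) ≥ c₀·r^{−d−2} for all r ≥ R₀, and there exist c, R, α > 0 such that r^{d+2}·j(r) ≥ c·(r/s)^α·s^{d+2}·j(s) for all R ≤ s ≤ r. Then there exist C > 0 and R₁ > 0 such that m₂(r) ≤ C·r^{d+2}·j(r) for all r ≥ R₁. -/

import Mathlib

/-!
Split `B(0, r)` at a fixed radius `R₁ ≥ 1`. On `B(0, R₁)` we have `|x|² ≤ R₁² min{1, |x|²}`, so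
that piece is at most a constant times the Lévy–Khintchine integral; since the lower bound on `j`
gives `r^(d+2) j(r) ≥ c₀`, any constant is `O(r^(d+2) j(r))`. On `R₁ ≤ |x| < r` the scaling
hypothesis with `s = |x|` gives `|x|² j(|x|) ≤ c⁻¹ r^(d+2-α) j(r) |x|^(α-d)`, and
`∫_{B(0,r)} |x|^(α-d) dx = r^α ∫_{B(0,1)} |x|^(α-d) dx` is finite because `α > 0`.
-/

open MeasureTheory Metric ENNReal

/-- Truncated second moment `m₂(r) = ∫_{B(0,r)} |x|² j(|x|) dx` in `ℝ^d`. -/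
noncomputable def m2 (d : ℕ) (j : ℝ → ℝ) (r : ℝ) : ℝ≥0∞ :=
  ∫⁻ x in Metric.ball (0 : EuclideanSpace ℝ (Fin d)) r,
    ENNReal.ofReal (‖x‖ ^ 2 * j ‖x‖)

theorem le_pow_mul_of_mul_rpow_neg_le {a b r : ℝ} (hr : 0 < r) (n : ℕ)
    (h : a * r ^ (-(n : ℝ)) ≤ b) : a ≤ r ^ n * b :=
  calc a = r ^ n * (a * r ^ (-(n : ℝ))) := by
        rw [Real.rpow_neg hr.le, Real.rpow_natCast]; field_simp
    _ ≤ r ^ n * b := by gcongr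

theorem sq_mul_le_of_scaling (j : ℝ → ℝ) {n : ℕ} {c α s r : ℝ} (hc : 0 < c) (hs : 0 < s)
    (hr : 0 < r) (h : c * (r / s) ^ α * (s ^ (n + 2) * j s) ≤ r ^ (n + 2) * j r) :
    s ^ 2 * j s ≤ r ^ (n + 2) * j r / (c * r ^ α) * s ^ (α - n) := by
  rw [Real.div_rpow hr.le hs.le] at h
  rw [Real.rpow_sub hs, Real.rpow_natCast, div_mul_div_comm, le_div_iff₀ (by positivity)]
  calc s ^ 2 * j s * (c * r ^ α * s ^ n)
      = c * (r ^ α / s ^ α) * (s ^ (n + 2) * j s) * s ^ α := by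
        field_simp; ring
    _ ≤ r ^ (n + 2) * j r * s ^ α := by gcongr

theorem ofReal_sq_mul_le_ofReal_sq_mul_min {a ρ t : ℝ} (ha : 0 ≤ a) (haρ : a < ρ) (hρ : 1 ≤ ρ) :
    ENNReal.ofReal (a ^ 2 * t) ≤ ENNReal.ofReal (ρ ^ 2) * ENNReal.ofReal (min 1 (a ^ 2) * t) := by
  rcases le_or_gt t 0 with ht | ht
  · rw [ENNReal.ofReal_of_nonpos (mul_nonpos_of_nonneg_of_nonpos (sq_nonneg a) ht)]
    exact zero_le
  rw [← ENNReal.ofReal_mul (sq_nonneg ρ), ← mul_assoc]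
  refine ENNReal.ofReal_le_ofReal (mul_le_mul_of_nonneg_right ?_ ht.le)
  rcases le_total (a ^ 2) 1 with h | h
  · rw [min_eq_right h]
    nlinarith [mul_le_mul_of_nonneg_right (one_le_pow₀ hρ : 1 ≤ ρ ^ 2) (sq_nonneg a)]
  · rw [min_eq_left h]; nlinarith

theorem setLIntegral_ball_norm_sq_mul_le {E : Type*} [NormedAddCommGroup E] [MeasurableSpace E]
    [OpensMeasurableSpace E] (μ : Measure E) (j : ℝ → ℝ) {ρ : ℝ} (hρ : 1 ≤ ρ) :
    ∫⁻ x in ball 0 ρ, ENNReal.ofReal (‖x‖ ^ 2 * j ‖x‖) ∂μ ≤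
      ENNReal.ofReal (ρ ^ 2) * ∫⁻ x, ENNReal.ofReal (min 1 (‖x‖ ^ 2) * j ‖x‖) ∂μ :=
  calc ∫⁻ x in ball 0 ρ, ENNReal.ofReal (‖x‖ ^ 2 * j ‖x‖) ∂μ
      ≤ ∫⁻ x in ball 0 ρ, ENNReal.ofReal (ρ ^ 2) *
          ENNReal.ofReal (min 1 (‖x‖ ^ 2) * j ‖x‖) ∂μ :=
        setLIntegral_mono' measurableSet_ball fun x hx ↦
          ofReal_sq_mul_le_ofReal_sq_mul_min (norm_nonneg x) (mem_ball_zero_iff.mp hx) hρ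
    _ ≤ ∫⁻ x, ENNReal.ofReal (ρ ^ 2) * ENNReal.ofReal (min 1 (‖x‖ ^ 2) * j ‖x‖) ∂μ :=
        setLIntegral_le_lintegral _ _
    _ = _ := lintegral_const_mul' _ _ ENNReal.ofReal_ne_top

section BallIntegrals

variable {E : Type*} [NormedAddCommGroup E] [NormedSpace ℝ E] [FiniteDimensional ℝ E]
  [MeasurableSpace E] [BorelSpace E] (μ : Measure E) [μ.IsAddHaarMeasure]

open Module

theorem setIntegral_ball_norm_rpow (β : ℝ) {r : ℝ} (hr : 0 < r) :
    ∫ x in ball 0 r, ‖x‖ ^ β ∂μ = r ^ (β + finrank ℝ E) * ∫ x in ball 0 1, ‖x‖ ^ β ∂μ := by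
  have hscale := Measure.setIntegral_comp_smul_of_pos μ (fun x : E ↦ ‖x‖ ^ β) (ball 0 1) hr
  simp only [smul_unitBall_of_pos hr, norm_smul, Real.norm_of_nonneg hr.le,
    Real.mul_rpow hr.le (norm_nonneg _), integral_const_mul, smul_eq_mul] at hscale
  rw [Real.rpow_add hr, Real.rpow_natCast, mul_comm (r ^ β), mul_assoc, hscale,
    ← mul_assoc, mul_inv_cancel₀ (by positivity), one_mul]

theorem integrableOn_ball_norm_rpow (hd : 1 ≤ finrank ℝ E) {β : ℝ} (hβ : -(finrank ℝ E : ℝ) < β)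
    (r : ℝ) : IntegrableOn (fun x : E ↦ ‖x‖ ^ β) (ball 0 r) μ := by
  refine integrableOn_ball_of_norm_le_rpow (C := 1) (α := -β) hd (by linarith)
    (ae_of_all _ fun x ↦ ?_) (measurable_norm.pow_const β).aestronglyMeasurable
  rw [neg_neg, one_mul, Real.norm_of_nonneg (by positivity)]

theorem lintegral_ball_norm_rpow (hd : 1 ≤ finrank ℝ E) {β : ℝ} (hβ : -(finrank ℝ E : ℝ) < β)
    {r : ℝ} (hr : 0 < r) :
    ∫⁻ x in ball 0 r, ENNReal.ofReal (‖x‖ ^ β) ∂μ =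
      ENNReal.ofReal (r ^ (β + finrank ℝ E) * ∫ x in ball 0 1, ‖x‖ ^ β ∂μ) := by
  rw [← setIntegral_ball_norm_rpow μ β hr, ofReal_integral_eq_lintegral_ofReal
    (integrableOn_ball_norm_rpow μ hd hβ r) (ae_of_all _ fun x ↦ by positivity)]

theorem setLIntegral_ball_sdiff_ball_le (hd : 1 ≤ finrank ℝ E) (j : ℝ → ℝ) {c α ρ r : ℝ}
    (hc : 0 < c) (hα : 0 < α) (hρ : 0 < ρ) (hr : 0 < r)
    (hscale : ∀ s, ρ ≤ s → s ≤ r →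
      c * (r / s) ^ α * (s ^ (finrank ℝ E + 2) * j s) ≤ r ^ (finrank ℝ E + 2) * j r) :
    ∫⁻ x in ball 0 r \ ball 0 ρ, ENNReal.ofReal (‖x‖ ^ 2 * j ‖x‖) ∂μ ≤
      ENNReal.ofReal (r ^ (finrank ℝ E + 2) * j r / c *
        ∫ x in ball 0 1, ‖x‖ ^ (α - finrank ℝ E) ∂μ) := by
  set n := finrank ℝ E
  set k := r ^ (n + 2) * j r / (c * r ^ α)
  have hK : 0 ≤ ∫ x in ball (0 : E) 1, ‖x‖ ^ (α - n) ∂μ :=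
    setIntegral_nonneg measurableSet_ball fun x _ ↦ by positivity
  calc ∫⁻ x in ball 0 r \ ball 0 ρ, ENNReal.ofReal (‖x‖ ^ 2 * j ‖x‖) ∂μ
      ≤ ∫⁻ x in ball 0 r \ ball 0 ρ, ENNReal.ofReal k * ENNReal.ofReal (‖x‖ ^ (α - n)) ∂μ := by
        refine setLIntegral_mono (by fun_prop) fun x hx ↦ ?_
        have hρx : ρ ≤ ‖x‖ := by simpa using hx.2
        have hxr : ‖x‖ < r := mem_ball_zero_iff.mp hx.1
        rw [← ENNReal.ofReal_mul' (by positivity)]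
        exact ENNReal.ofReal_le_ofReal <| sq_mul_le_of_scaling j hc (hρ.trans_le hρx) hr
          (hscale _ hρx hxr.le)
    _ ≤ ENNReal.ofReal k * ∫⁻ x in ball 0 r, ENNReal.ofReal (‖x‖ ^ (α - n)) ∂μ := by
        rw [lintegral_const_mul _ (by fun_prop)]
        gcongr
        exact Set.sdiff_subset
    _ = ENNReal.ofReal (r ^ (n + 2) * j r / c * ∫ x in ball 0 1, ‖x‖ ^ (α - n) ∂μ) := by
        rw [lintegral_ball_norm_rpow μ hd (by linarith) hr, sub_add_cancel,
          ← ENNReal.ofReal_mul' (by positivity)]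
        congr 1
        simp only [k]
        field_simp

theorem exists_setLIntegral_ball_norm_sq_mul_le (hd : 1 ≤ finrank ℝ E) (j : ℝ → ℝ)
    (hLK : ∫⁻ x, ENNReal.ofReal (min 1 (‖x‖ ^ 2) * j ‖x‖) ∂μ < ⊤)
    {c₀ R₀ : ℝ} (hc₀ : 0 < c₀) (hlow : ∀ r, R₀ ≤ r → c₀ * r ^ (-(finrank ℝ E : ℝ) - 2) ≤ j r)
    {c R α : ℝ} (hc : 0 < c) (hα : 0 < α)
    (hscale : ∀ s r, R ≤ s → s ≤ r →
      c * (r / s) ^ α * (s ^ (finrank ℝ E + 2) * j s) ≤ r ^ (finrank ℝ E + 2) * j r) :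
    ∃ C R₁ : ℝ, 0 < C ∧ 0 < R₁ ∧ ∀ r, R₁ ≤ r →
      ∫⁻ x in ball 0 r, ENNReal.ofReal (‖x‖ ^ 2 * j ‖x‖) ∂μ ≤
        ENNReal.ofReal (C * (r ^ (finrank ℝ E + 2) * j r)) := by
  set n := finrank ℝ E
  set R₁ := max 1 (max R₀ R)
  set L := (∫⁻ x, ENNReal.ofReal (min 1 (‖x‖ ^ 2) * j ‖x‖) ∂μ).toReal
  set K := ∫ x in ball (0 : E) 1, ‖x‖ ^ (α - n) ∂μ
  have hL : 0 ≤ L := ENNReal.toReal_nonneg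
  have hK : 0 ≤ K := setIntegral_nonneg measurableSet_ball fun x _ ↦ by positivity
  have hR₁ : 1 ≤ R₁ := le_max_left _ _
  refine ⟨R₁ ^ 2 * L / c₀ + K / c + 1, R₁, by positivity, by linarith, fun r hr ↦ ?_⟩
  have hr0 : 0 < r := by linarith
  set X := r ^ (n + 2) * j r
  have hX : c₀ ≤ X := le_pow_mul_of_mul_rpow_neg_le hr0 (n + 2) <| by
    rw [Nat.cast_add, Nat.cast_two, neg_add']
    exact hlow r ((le_max_left _ _).trans ((le_max_right _ _).trans hr))
  have hinner := setLIntegral_ball_norm_sq_mul_le μ j hR₁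
  rw [← ENNReal.ofReal_toReal hLK.ne, ← ENNReal.ofReal_mul (sq_nonneg _)] at hinner
  have houter := setLIntegral_ball_sdiff_ball_le μ hd j hc hα (by linarith) hr0
    fun s hs hsr ↦ hscale s r ((le_max_right _ _).trans ((le_max_right _ _).trans hs)) hsr
  calc ∫⁻ x in ball 0 r, ENNReal.ofReal (‖x‖ ^ 2 * j ‖x‖) ∂μ
      = (∫⁻ x in ball 0 r ∩ ball 0 R₁, ENNReal.ofReal (‖x‖ ^ 2 * j ‖x‖) ∂μ) +
          ∫⁻ x in ball 0 r \ ball 0 R₁, ENNReal.ofReal (‖x‖ ^ 2 * j ‖x‖) ∂μ :=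
        (lintegral_inter_add_sdiff _ _ measurableSet_ball).symm
    _ ≤ ENNReal.ofReal (R₁ ^ 2 * L) + ENNReal.ofReal (X / c * K) :=
        add_le_add ((lintegral_mono_set Set.inter_subset_right).trans hinner) houter
    _ = ENNReal.ofReal (R₁ ^ 2 * L + X / c * K) :=
        (ENNReal.ofReal_add (by positivity) (by have := hc₀.le.trans hX; positivity)).symm
    _ ≤ ENNReal.ofReal ((R₁ ^ 2 * L / c₀ + K / c + 1) * X) := by
        refine ENNReal.ofReal_le_ofReal ?_
        have hconst : R₁ ^ 2 * L ≤ R₁ ^ 2 * L / c₀ * X := by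
          rw [div_mul_eq_mul_div, le_div_iff₀ hc₀]
          gcongr
        have : X / c * K = K / c * X := by ring
        nlinarith

end BallIntegrals

theorem stmt3_general (d : ℕ) (hd : 1 ≤ d) (j : ℝ → ℝ)
    (hLK : (∫⁻ x : EuclideanSpace ℝ (Fin d),
      ENNReal.ofReal (min 1 (‖x‖ ^ 2) * j ‖x‖)) < ⊤)
    (c₀ R₀ : ℝ) (hc₀ : 0 < c₀)
    (hlow : ∀ r : ℝ, R₀ ≤ r → c₀ * r ^ (-(d : ℝ) - 2) ≤ j r)
    (c R α : ℝ) (hc : 0 < c) (hα : 0 < α)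
    (hscale : ∀ s r : ℝ, R ≤ s → s ≤ r →
      c * (r / s) ^ α * (s ^ (d + 2) * j s) ≤ r ^ (d + 2) * j r) :
    ∃ C R₁ : ℝ, 0 < C ∧ 0 < R₁ ∧ ∀ r : ℝ, R₁ ≤ r →
      m2 d j r ≤ ENNReal.ofReal (C * (r ^ (d + 2) * j r)) := by
  have key := exists_setLIntegral_ball_norm_sq_mul_le (E := EuclideanSpace ℝ (Fin d)) volume
  rw [finrank_euclideanSpace_fin] at key
  exact key hd j hLK hc₀ hlow hc hα hscale

theorem stmt3 (d : ℕ) (hd : 1 ≤ d) (j : ℝ → ℝ)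
    (hnonneg : ∀ r : ℝ, 0 < r → 0 ≤ j r)
    (hmono : AntitoneOn j (Set.Ioi (0 : ℝ)))
    (hLK : (∫⁻ x : EuclideanSpace ℝ (Fin d),
      ENNReal.ofReal (min 1 (‖x‖ ^ 2) * j ‖x‖)) < ⊤)
    (c₀ R₀ : ℝ) (hc₀ : 0 < c₀) (hR₀ : 0 < R₀)
    (hlow : ∀ r : ℝ, R₀ ≤ r → c₀ * r ^ (-(d : ℝ) - 2) ≤ j r)
    (c R α : ℝ) (hc : 0 < c) (hR : 0 < R) (hα : 0 < α)
    (hscale : ∀ s r : ℝ, R ≤ s → s ≤ r →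
      c * (r / s) ^ α * (s ^ (d + 2) * j s) ≤ r ^ (d + 2) * j r) :
    ∃ C R₁ : ℝ, 0 < C ∧ 0 < R₁ ∧ ∀ r : ℝ, R₁ ≤ r →
      m2 d j r ≤ ENNReal.ofReal (C * (r ^ (d + 2) * j r)) :=
  stmt3_general d hd j hLK c₀ R₀ hc₀ hlow c R α hc hα hscale
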